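/- Let X be a complex Hilbert space, let M₁, …, M_N (N ≥ 2) be closed subspaces of X with M = M₁ ∩ … ∩ M_N ≠ X, let P_k denote the orthogonal projection of X onto M_k, let P_M denote the orthogonal projection onto M, and let T = P_N ⋯ P₁. If the subspace M₁^⊥ + ⋯ + M_N^⊥ is closed in X, then there exist constants C > 0 and r ∈ [0, 1) such that ‖T^n − P_M‖ ≤ C rⁿ for all n ≥ 0 (exponentially fast convergence); if M₁^⊥ + ⋯ + M_N^⊥ is not closed in X, then the convergence is arbitrarily slow: for every sequence (r_n) of positive real numbers with r_n → 0 as n → ∞ there exists x ∈ X such that ‖T^n x − P_M x‖ ≥ r_n for all n ≥ 0. -/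

import Mathlib

/-!
If `M₁ᗮ + ⋯ + M_Nᗮ` is closed, it equals `Mᗮ`, and by the open mapping theorem every `x ∈ Mᗮ`
splits as `∑ uᵢ` with `uᵢ ∈ Mᵢᗮ` and `‖uᵢ‖ ≤ C ‖x‖`. Pairing `‖x‖² = ∑ ⟪uᵢ, x - Pᵢ x⟫` with the
polygonal path `x, P₁ x, P₂ P₁ x, …, T x`, whose squared step lengths add up to `‖x‖² - ‖T x‖²`,
gives `‖x‖² ≤ K (‖x‖² - ‖T x‖²)`: `T` is a strict contraction on `Mᗮ`.

Conversely `x - T x` always lies in `M₁ᗮ + ⋯ + M_Nᗮ`, so if some power of `T` were a strict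
contraction on `Mᗮ`, the Neumann series would put all of `Mᗮ` inside that sum and make it closed.
Hence, when the sum is not closed, every `Tⁿ` almost preserves the norm of some vector of `Mᗮ`,
and a Müller-type series `x = ∑ uₖ`, with `‖uₖ‖ ~ 4⁻ᵏ` chosen so that `‖T^(mₖ) x‖ ≳ 4⁻ᵏ` at
suitable times `mₖ`, decays more slowly than any prescribed null sequence.
-/

open Filter Topology

/-- The orthogonal projection onto a subspace, as an endomorphism. -/
noncomputable def projOnto {X : Type*} [NormedAddCommGroup X] [InnerProductSpace ℂ X]
    (K : Submodule ℂ X) [K.HasOrthogonalProjection] : X →L[ℂ] X :=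
  K.subtypeL.comp K.orthogonalProjectionOnto

/-- The product `P_k ⋯ P_1` of the orthogonal projections onto the first `k` of the
subspaces `M 0, …, M (N-1)` (applied in order: first `P_1 = projOnto (M 0)`, etc.);
for `k = N` this is the operator `T = P_N ⋯ P_1` of the method of cyclic alternating
projections. -/
noncomputable def cycleProd {X : Type*} [NormedAddCommGroup X] [InnerProductSpace ℂ X]
    {N : ℕ} (M : Fin N → Submodule ℂ X) [∀ i, CompleteSpace (M i)] (k : ℕ) :
    X →L[ℂ] X :=
  (((List.ofFn fun i => projOnto (M i)).take k).reverse).prod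

section Powers

variable {𝕜 E : Type*} [NontriviallyNormedField 𝕜] [NormedAddCommGroup E] [NormedSpace 𝕜 E]
  {S : E →L[𝕜] E}

theorem sub_pow_apply_mem {U : Submodule 𝕜 E} (h : ∀ x, x - S x ∈ U) (n : ℕ) (x : E) :
    x - (S ^ n) x ∈ U := by
  induction n with
  | zero => simp
  | succ n ih =>
    rw [pow_succ', mul_apply_eq_comp, ← sub_add_sub_cancel x ((S ^ n) x)]
    exact U.add_mem ih (h _)

theorem norm_pow_apply_le_of_forall_mem {W : Submodule 𝕜 E} (hSW : ∀ x ∈ W, S x ∈ W)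
    {r : ℝ} (hr : 0 ≤ r) (hS : ∀ x ∈ W, ‖S x‖ ≤ r * ‖x‖) (n : ℕ) {x : E} (hx : x ∈ W) :
    ‖(S ^ n) x‖ ≤ r ^ n * ‖x‖ := by
  induction n generalizing x with
  | zero => simp
  | succ n ih =>
    calc ‖(S ^ (n + 1)) x‖ = ‖(S ^ n) (S x)‖ := by rw [pow_succ, mul_apply_eq_comp]
      _ ≤ r ^ n * ‖S x‖ := ih (hSW x hx)
      _ ≤ r ^ n * (r * ‖x‖) := by gcongr; exact hS x hx
      _ = r ^ (n + 1) * ‖x‖ := by ring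

theorem antitone_norm_pow_apply (hS : ∀ x, ‖S x‖ ≤ ‖x‖) (x : E) :
    Antitone fun n => ‖(S ^ n) x‖ :=
  antitone_nat_of_succ_le fun n => by
    rw [pow_succ', mul_apply_eq_comp]
    exact hS _

theorem exists_sub_apply_eq_of_norm_le [CompleteSpace E] {W : Submodule 𝕜 E}
    (hSW : ∀ x ∈ W, S x ∈ W) {c : ℝ} (hc₀ : 0 ≤ c) (hc₁ : c < 1)
    (hS : ∀ x ∈ W, ‖S x‖ ≤ c * ‖x‖) {x : E} (hx : x ∈ W) : ∃ y, y - S y = x := by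
  have hsum : Summable fun n => (S ^ n) x :=
    .of_norm_bounded ((summable_geometric_of_lt_one hc₀ hc₁).mul_right ‖x‖)
      fun n => norm_pow_apply_le_of_forall_mem hSW hc₀ hS n hx
  refine ⟨∑' n, (S ^ n) x, ?_⟩
  rw [S.map_tsum hsum, hsum.tsum_eq_zero_add]
  simp only [pow_zero, pow_succ', mul_apply_eq_comp, one_apply_eq_self,
    add_sub_cancel_right]

end Powers

section SlowDecay

variable {𝕜 E F : Type*} [RCLike 𝕜] [NormedAddCommGroup E] [NormedSpace 𝕜 E]
  [NormedAddCommGroup F] [NormedSpace 𝕜 F]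

theorem exists_mem_norm_le_and_mul_le_norm_apply_add {L : E →L[𝕜] F} {V : Submodule 𝕜 E}
    {ρ : ℝ} {z : E} (hz : z ∈ V) (hLz : ρ * ‖z‖ < ‖L z‖) (y : E) {c : ℝ} (hc : 0 ≤ c) :
    ∃ u ∈ V, ‖u‖ ≤ c ∧ ρ * c ≤ ‖L (y + u)‖ := by
  have hz₀ : 0 < ‖z‖ := norm_pos_iff.2 fun h => by simp [h] at hLz
  set w : E := ((c / ‖z‖ : ℝ) : 𝕜) • z
  have hw : ‖w‖ = c := by
    rw [norm_smul, RCLike.norm_ofReal, abs_of_nonneg (by positivity), div_mul_cancel₀ _ hz₀.ne']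
  have hLw : ρ * c ≤ ‖L w‖ := by
    rw [map_smul, norm_smul, RCLike.norm_ofReal, abs_of_nonneg (by positivity)]
    calc ρ * c = c / ‖z‖ * (ρ * ‖z‖) := by field_simp
      _ ≤ c / ‖z‖ * ‖L z‖ := by gcongr
  have hsum : 2 * ‖L w‖ ≤ ‖L (y + w)‖ + ‖L (y - w)‖ := by
    calc 2 * ‖L w‖ = ‖L (y + w) - L (y - w)‖ := by
          rw [← map_sub, add_sub_sub_cancel, ← two_smul 𝕜, map_smul L (2 : 𝕜) w, norm_smul,
            RCLike.norm_two]
      _ ≤ ‖L (y + w)‖ + ‖L (y - w)‖ := norm_sub_le _ _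
  rcases le_total ‖L (y - w)‖ ‖L (y + w)‖ with h | h
  · exact ⟨w, V.smul_mem _ hz, hw.le, by linarith⟩
  · exact ⟨-w, V.neg_mem (V.smul_mem _ hz), by rw [norm_neg, hw], by
      rw [← sub_eq_add_neg]; linarith⟩

theorem exists_mem_forall_mul_geometric_le_norm_pow_apply [CompleteSpace E] {V : Submodule 𝕜 E}
    (hV : IsClosed (V : Set E)) {A : E →L[𝕜] E} (hA : ∀ x, ‖A x‖ ≤ ‖x‖)
    (hslow : ∀ n, ∃ z ∈ V, 1 / 2 * ‖z‖ < ‖(A ^ n) z‖) (m : ℕ → ℕ) {a : ℝ} (ha : 0 < a) :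
    ∃ x ∈ V, ∀ k, a * (1 / 4) ^ k ≤ ‖(A ^ m k) x‖ := by
  -- Steps of size `6a/4ᵏ`: the tail after step `k` is at most `2a/4ᵏ`, while step `k` pushes
  -- `‖A^(m k) s (k+1)‖` up to `3a/4ᵏ`.
  choose! u huV hu_norm hu_big using fun k y =>
    let ⟨_, hz, hlt⟩ := hslow (m k)
    exists_mem_norm_le_and_mul_le_norm_apply_add hz hlt y (c := 6 * a * (1 / 4) ^ k)
      (by positivity)
  let s : ℕ → E := fun k => Nat.rec 0 (fun k y => y + u k y) k
  have hs_succ (k : ℕ) : s (k + 1) = s k + u k (s k) := rfl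
  have hsV (k : ℕ) : s k ∈ V := by
    induction k with
    | zero => exact V.zero_mem
    | succ k ih => rw [hs_succ]; exact V.add_mem ih (huV k _)
  have hs_dist (k : ℕ) : dist (s k) (s (k + 1)) ≤ 6 * a * (1 / 4) ^ k := by
    rw [hs_succ, dist_self_add_right]; exact hu_norm k _
  obtain ⟨x, hx⟩ := cauchySeq_tendsto_of_complete
    (cauchySeq_of_le_geometric _ _ (by norm_num) hs_dist)
  refine ⟨x, hV.mem_of_tendsto hx (Eventually.of_forall hsV), fun k => ?_⟩
  have htail : ‖s (k + 1) - x‖ ≤ 2 * a * (1 / 4) ^ k := by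
    rw [← dist_eq_norm]
    convert dist_le_of_le_geometric_of_tendsto _ _ (by norm_num) hs_dist hx (k + 1) using 1
    ring
  have hbig : 3 * a * (1 / 4) ^ k ≤ ‖(A ^ m k) (s (k + 1))‖ := by
    rw [hs_succ]; convert hu_big k (s k) using 1; ring
  have hA' : ‖(A ^ m k) (s (k + 1) - x)‖ ≤ ‖s (k + 1) - x‖ := by
    simpa using antitone_norm_pow_apply hA (s (k + 1) - x) (Nat.zero_le (m k))
  calc a * (1 / 4) ^ k ≤ ‖(A ^ m k) (s (k + 1))‖ - ‖(A ^ m k) (s (k + 1) - x)‖ := by linarith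
    _ ≤ ‖(A ^ m k) x‖ := by
      rw [map_sub]
      linarith [norm_le_norm_add_norm_sub' ((A ^ m k) (s (k + 1))) ((A ^ m k) x)]

theorem exists_forall_exists_le_of_tendsto_zero {r γ : ℕ → ℝ} (hr : Tendsto r atTop (𝓝 0))
    (hγ : ∀ k, 0 < γ k) (hr₀ : ∀ n, r n ≤ γ 0) :
    ∃ m : ℕ → ℕ, ∀ n, ∃ k, n ≤ m k ∧ r n ≤ γ k := by
  have hthr (k : ℕ) : ∃ N, ∀ n ≥ N, r n ≤ γ (k + 1) :=
    eventually_atTop.1 (hr.eventually (ge_mem_nhds (hγ (k + 1))))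
  choose thr hthr using hthr
  refine ⟨fun k => max (thr k) k, fun n => ?_⟩
  classical
  have hex : ∃ k, n ≤ max (thr k) k := ⟨n, le_max_right _ _⟩
  refine ⟨Nat.find hex, Nat.find_spec hex, ?_⟩
  rcases h : Nat.find hex with _ | k
  · exact hr₀ n
  · have : ¬ n ≤ max (thr k) k := Nat.find_min hex (by omega)
    exact hthr k n (by omega)

theorem exists_mem_forall_le_norm_pow_apply [CompleteSpace E] {V : Submodule 𝕜 E}
    (hV : IsClosed (V : Set E)) {A : E →L[𝕜] E} (hA : ∀ x, ‖A x‖ ≤ ‖x‖)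
    (hslow : ∀ n, ∃ z ∈ V, 1 / 2 * ‖z‖ < ‖(A ^ n) z‖) {r : ℕ → ℝ} (hr_pos : ∀ n, 0 < r n)
    (hr : Tendsto r atTop (𝓝 0)) : ∃ x ∈ V, ∀ n, r n ≤ ‖(A ^ n) x‖ := by
  obtain ⟨R, hR⟩ := hr.bddAbove_range
  have hR₀ : 0 < R := (hr_pos 0).trans_le (hR (Set.mem_range_self 0))
  obtain ⟨m, hm⟩ := exists_forall_exists_le_of_tendsto_zero hr (γ := fun k => R * (1 / 4) ^ k)
    (fun k => by positivity) (fun n => by simpa using hR (Set.mem_range_self n))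
  obtain ⟨x, hxV, hx⟩ := exists_mem_forall_mul_geometric_le_norm_pow_apply hV hA hslow m hR₀
  refine ⟨x, hxV, fun n => ?_⟩
  obtain ⟨k, hnk, hrk⟩ := hm n
  exact hrk.trans ((hx k).trans (antitone_norm_pow_apply hA x hnk))

end SlowDecay

section OpenMapping

variable {𝕜 E ι : Type*} [NontriviallyNormedField 𝕜] [NormedAddCommGroup E] [NormedSpace 𝕜 E]
  [CompleteSpace E] [Fintype ι]

theorem Submodule.exists_sum_eq_and_norm_le_of_isClosed_iSup (U : ι → Submodule 𝕜 E)
    [∀ i, CompleteSpace (U i)] (hU : IsClosed ((⨆ i, U i : Submodule 𝕜 E) : Set E)) :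
    ∃ C > 0, ∀ x ∈ ⨆ i, U i, ∃ u : ι → E, (∀ i, u i ∈ U i) ∧ ∑ i, u i = x ∧
      ∀ i, ‖u i‖ ≤ C * ‖x‖ := by
  have : CompleteSpace (⨆ i, U i : Submodule 𝕜 E) := hU.completeSpace_coe
  let Φ : (∀ i, U i) →L[𝕜] (⨆ i, U i : Submodule 𝕜 E) :=
    (∑ i, (U i).subtypeL.comp (ContinuousLinearMap.proj i)).codRestrict _ fun v => by
      simpa using Submodule.sum_mem _ fun i _ => Submodule.mem_iSup_of_mem i (v i).2
  have hΦ : Function.Surjective Φ := fun ⟨x, hx⟩ => by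
    obtain ⟨v, hv⟩ := (Submodule.mem_iSup_finset_iff_exists_sum U x (s := .univ)).1 (by simpa)
    exact ⟨v, Subtype.ext (by simpa [Φ] using hv)⟩
  obtain ⟨C, hC, hpre⟩ := Φ.exists_preimage_norm_le hΦ
  refine ⟨C, hC, fun x hx => ?_⟩
  obtain ⟨v, hv, hv_norm⟩ := hpre ⟨x, hx⟩
  refine ⟨fun i => v i, fun i => (v i).2, by simpa [Φ] using congrArg Subtype.val hv,
    fun i => (norm_le_pi_norm v i).trans hv_norm⟩

end OpenMapping

section Hilbert

variable {𝕜 E ι : Type*} [RCLike 𝕜] [NormedAddCommGroup E] [InnerProductSpace 𝕜 E]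

namespace Submodule

theorem norm_sub_starProjection_le_norm_sub (K : Submodule 𝕜 E) [K.HasOrthogonalProjection]
    (x : E) {m : E} (hm : m ∈ K) : ‖x - K.starProjection x‖ ≤ ‖x - m‖ := by
  rw [starProjection_minimal]
  exact ciInf_le ⟨0, Set.forall_mem_range.2 fun _ => norm_nonneg _⟩ (⟨m, hm⟩ : K)

theorem norm_sq_starProjection_add_norm_sq_sub (K : Submodule 𝕜 E) [K.HasOrthogonalProjection]
    (x : E) : ‖K.starProjection x‖ ^ 2 + ‖x - K.starProjection x‖ ^ 2 = ‖x‖ ^ 2 := by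
  rw [norm_sq_eq_add_norm_sq_starProjection x K, K.starProjection_orthogonal',
    sub_apply, one_apply_eq_self]

theorem iSup_orthogonal_le_orthogonal_iInf (K : ι → Submodule 𝕜 E) :
    ⨆ i, (K i)ᗮ ≤ (⨅ i, K i)ᗮ :=
  iSup_le fun i => orthogonal_le (iInf_le K i)

theorem iSup_orthogonal_eq_orthogonal_iInf [CompleteSpace E] (K : ι → Submodule 𝕜 E)
    [∀ i, (K i).HasOrthogonalProjection] (h : IsClosed ((⨆ i, (K i)ᗮ : Submodule 𝕜 E) : Set E)) :
    ⨆ i, (K i)ᗮ = (⨅ i, K i)ᗮ := by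
  rw [← h.submodule_topologicalClosure_eq, ← orthogonal_orthogonal_eq_closure,
    ← iInf_orthogonal fun i => (K i)ᗮ]
  simp_rw [orthogonal_orthogonal]

theorem norm_sq_le_sum_norm_mul_norm_sub_starProjection [Fintype ι] (U : ι → Submodule 𝕜 E)
    [∀ i, (U i).HasOrthogonalProjection] {u : ι → E} (hu : ∀ i, u i ∈ (U i)ᗮ) {x : E}
    (hx : ∑ i, u i = x) : ‖x‖ ^ 2 ≤ ∑ i, ‖u i‖ * ‖x - (U i).starProjection x‖ :=
  calc ‖x‖ ^ 2 = RCLike.re (inner 𝕜 x x) := (inner_self_eq_norm_sq x).symm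
    _ = ∑ i, RCLike.re (inner 𝕜 (u i) (x - (U i).starProjection x)) := by
      nth_rw 1 [← hx]
      rw [sum_inner, map_sum]
      refine Finset.sum_congr rfl fun i _ => ?_
      rw [inner_sub_right, inner_left_of_mem_orthogonal (starProjection_apply_mem _ x) (hu i),
        sub_zero]
    _ ≤ ∑ i, ‖u i‖ * ‖x - (U i).starProjection x‖ :=
      Finset.sum_le_sum fun i _ => re_inner_le_norm _ _

end Submodule

end Hilbert

theorem exists_lt_one_forall_norm_le_of_sq_le {E F : Type*} [NormedAddCommGroup E]
    [NormedAddCommGroup F] {S : E → F} {W : Set E} {K : ℝ} (hK : 0 ≤ K)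
    (hS : ∀ x ∈ W, ‖S x‖ ≤ ‖x‖) (h : ∀ x ∈ W, ‖x‖ ^ 2 ≤ K * (‖x‖ ^ 2 - ‖S x‖ ^ 2)) :
    ∃ r, 0 ≤ r ∧ r < 1 ∧ ∀ x ∈ W, ‖S x‖ ≤ r * ‖x‖ := by
  refine ⟨√(1 - 1 / (K + 1)), Real.sqrt_nonneg _, ?_, fun x hx => ?_⟩
  · rw [Real.sqrt_lt' one_pos]
    have : 0 < 1 / (K + 1) := by positivity
    linarith
  · have hSx : ‖S x‖ ^ 2 ≤ ‖x‖ ^ 2 := pow_le_pow_left₀ (norm_nonneg _) (hS x hx) 2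
    have hq : ‖S x‖ ^ 2 ≤ (1 - 1 / (K + 1)) * ‖x‖ ^ 2 := by
      rw [one_sub_div (by positivity), div_mul_eq_mul_div, le_div_iff₀ (by positivity)]
      nlinarith [h x hx]
    rw [← Real.sqrt_sq (norm_nonneg (S x)), ← Real.sqrt_sq (norm_nonneg x),
      ← Real.sqrt_mul' _ (sq_nonneg _)]
    exact Real.sqrt_le_sqrt hq

section AlternatingProjections

variable {X : Type*} [NormedAddCommGroup X] [InnerProductSpace ℂ X]

theorem projOnto_eq_starProjection (K : Submodule ℂ X) [K.HasOrthogonalProjection] :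
    projOnto K = K.starProjection :=
  rfl

variable {N : ℕ} (M : Fin N → Submodule ℂ X) [∀ i, CompleteSpace (M i)]

theorem cycleProd_zero : cycleProd M 0 = 1 := by
  simp [cycleProd]

theorem cycleProd_succ {k : ℕ} (hk : k < N) :
    cycleProd M (k + 1) = (M ⟨k, hk⟩).starProjection * cycleProd M k := by
  have hlen : k < (List.ofFn fun i => projOnto (M i)).length := by simpa using hk
  rw [cycleProd, cycleProd, List.take_add_one, List.getElem?_eq_getElem hlen]
  simp [List.getElem_ofFn, projOnto_eq_starProjection]

theorem cycleProd_succ_apply_mem {k : ℕ} (hk : k < N) (x : X) :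
    cycleProd M (k + 1) x ∈ M ⟨k, hk⟩ := by
  rw [cycleProd_succ M hk, mul_apply_eq_comp]
  exact Submodule.starProjection_apply_mem _ _

theorem sub_cycleProd_succ_apply_mem_orthogonal {k : ℕ} (hk : k < N) (x : X) :
    cycleProd M k x - cycleProd M (k + 1) x ∈ (M ⟨k, hk⟩)ᗮ := by
  rw [cycleProd_succ M hk, mul_apply_eq_comp]
  exact Submodule.sub_starProjection_mem_orthogonal _

theorem cycleProd_apply_of_mem_iInf {x : X} (hx : x ∈ ⨅ i, M i) {k : ℕ} (hk : k ≤ N) :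
    cycleProd M k x = x := by
  induction k with
  | zero => simp [cycleProd_zero]
  | succ k ih =>
    rw [cycleProd_succ M hk, mul_apply_eq_comp, ih (by omega)]
    exact Submodule.starProjection_eq_self_iff.2 (Submodule.mem_iInf M |>.1 hx _)

theorem sum_range_sub_cycleProd_apply (k : ℕ) (x : X) :
    ∑ j ∈ Finset.range k, (cycleProd M j x - cycleProd M (j + 1) x) = x - cycleProd M k x := by
  rw [Finset.sum_range_sub' (fun j => cycleProd M j x), cycleProd_zero, one_apply_eq_self]

theorem sub_cycleProd_apply_mem_iSup_orthogonal (x : X) :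
    x - cycleProd M N x ∈ ⨆ i, (M i)ᗮ := by
  rw [← sum_range_sub_cycleProd_apply]
  exact Submodule.sum_mem _ fun j hj => Submodule.mem_iSup_of_mem _
    (sub_cycleProd_succ_apply_mem_orthogonal M (Finset.mem_range.1 hj) x)

theorem cycleProd_apply_mem_orthogonal_iInf {x : X} (hx : x ∈ (⨅ i, M i)ᗮ) :
    cycleProd M N x ∈ (⨅ i, M i)ᗮ :=
  (Submodule.sub_mem_iff_right _ hx).1 <| Submodule.iSup_orthogonal_le_orthogonal_iInf M <|
    sub_cycleProd_apply_mem_iSup_orthogonal M x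

theorem sum_sq_norm_sub_cycleProd_apply (x : X) :
    ∑ j ∈ Finset.range N, ‖cycleProd M j x - cycleProd M (j + 1) x‖ ^ 2 =
      ‖x‖ ^ 2 - ‖cycleProd M N x‖ ^ 2 := by
  have hstep (j : ℕ) (hj : j ∈ Finset.range N) : ‖cycleProd M j x - cycleProd M (j + 1) x‖ ^ 2 =
      ‖cycleProd M j x‖ ^ 2 - ‖cycleProd M (j + 1) x‖ ^ 2 := by
    have hj := Finset.mem_range.1 hj
    rw [cycleProd_succ M hj, mul_apply_eq_comp,
      ← (M ⟨j, hj⟩).norm_sq_starProjection_add_norm_sq_sub (cycleProd M j x)]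
    ring
  rw [Finset.sum_congr rfl hstep, Finset.sum_range_sub' (fun j => ‖cycleProd M j x‖ ^ 2),
    cycleProd_zero, one_apply_eq_self]

theorem norm_cycleProd_apply_le (x : X) : ‖cycleProd M N x‖ ≤ ‖x‖ := by
  have h := sum_sq_norm_sub_cycleProd_apply M x
  have h₀ : 0 ≤ ∑ j ∈ Finset.range N, ‖cycleProd M j x - cycleProd M (j + 1) x‖ ^ 2 :=
    Finset.sum_nonneg fun _ _ => sq_nonneg _
  exact (pow_le_pow_iff_left₀ (norm_nonneg _) (norm_nonneg _) two_ne_zero).1 (by linarith)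

noncomputable def cyclePathLength (x : X) : ℝ :=
  ∑ j ∈ Finset.range N, ‖cycleProd M j x - cycleProd M (j + 1) x‖

theorem cyclePathLength_sq_le (x : X) :
    cyclePathLength M x ^ 2 ≤ N * (‖x‖ ^ 2 - ‖cycleProd M N x‖ ^ 2) := by
  have h := sq_sum_le_card_mul_sum_sq (s := Finset.range N)
    (f := fun j => ‖cycleProd M j x - cycleProd M (j + 1) x‖)
  rwa [Finset.card_range, sum_sq_norm_sub_cycleProd_apply] at h

theorem norm_sub_starProjection_le_cyclePathLength (i : Fin N) (x : X) :
    ‖x - (M i).starProjection x‖ ≤ cyclePathLength M x :=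
  calc ‖x - (M i).starProjection x‖ ≤ ‖x - cycleProd M (i + 1) x‖ :=
        Submodule.norm_sub_starProjection_le_norm_sub _ x (cycleProd_succ_apply_mem M i.2 x)
    _ ≤ ∑ j ∈ Finset.range (i + 1), ‖cycleProd M j x - cycleProd M (j + 1) x‖ := by
        rw [← sum_range_sub_cycleProd_apply]
        exact norm_sum_le _ _
    _ ≤ cyclePathLength M x :=
        Finset.sum_le_sum_of_subset_of_nonneg (Finset.range_subset_range.2 i.2)
          fun _ _ _ => norm_nonneg _

theorem norm_cycleProd_pow_sub_starProjection_le [CompleteSpace (⨅ i, M i : Submodule ℂ X)]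
    {r : ℝ} (hr₀ : 0 ≤ r) (hr : ∀ x ∈ (⨅ i, M i)ᗮ, ‖cycleProd M N x‖ ≤ r * ‖x‖) (n : ℕ) :
    ‖cycleProd M N ^ n - (⨅ i, M i).starProjection‖ ≤ r ^ n := by
  set P := (⨅ i, M i).starProjection
  refine ContinuousLinearMap.opNorm_le_bound _ (by positivity) fun y => ?_
  have hfix : (cycleProd M N ^ n) (P y) = P y := by
    rw [FunLike.coe_pow_eq_iterate]
    exact Function.iterate_fixed
      (cycleProd_apply_of_mem_iInf M (Submodule.starProjection_apply_mem _ y) le_rfl) n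
  calc ‖(cycleProd M N ^ n - P) y‖ = ‖(cycleProd M N ^ n) (y - P y)‖ := by
        rw [sub_apply, map_sub, hfix]
    _ ≤ r ^ n * ‖y - P y‖ :=
        norm_pow_apply_le_of_forall_mem (fun _ => cycleProd_apply_mem_orthogonal_iInf M) hr₀ hr n
          (Submodule.sub_starProjection_mem_orthogonal y)
    _ ≤ r ^ n * ‖y‖ := by
        gcongr; simpa using Submodule.norm_sub_starProjection_le_norm_sub _ y (zero_mem _)

variable [CompleteSpace X]

theorem exists_norm_le_mul_cyclePathLength
    (hcl : IsClosed ((⨆ i, (M i)ᗮ : Submodule ℂ X) : Set X)) :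
    ∃ B, 0 ≤ B ∧ ∀ x ∈ (⨅ i, M i)ᗮ, ‖x‖ ≤ B * cyclePathLength M x := by
  obtain ⟨C, hC, hdec⟩ :=
    Submodule.exists_sum_eq_and_norm_le_of_isClosed_iSup (fun i => (M i)ᗮ) hcl
  refine ⟨N * C, by positivity, fun x hx => ?_⟩
  rw [← Submodule.iSup_orthogonal_eq_orthogonal_iInf M hcl] at hx
  obtain ⟨u, hu, hsum, hu_norm⟩ := hdec x hx
  have hδ : 0 ≤ cyclePathLength M x := Finset.sum_nonneg fun _ _ => norm_nonneg _
  have h : ‖x‖ * ‖x‖ ≤ N * C * cyclePathLength M x * ‖x‖ :=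
    calc ‖x‖ * ‖x‖ = ‖x‖ ^ 2 := (sq _).symm
      _ ≤ ∑ i, ‖u i‖ * ‖x - (M i).starProjection x‖ :=
        Submodule.norm_sq_le_sum_norm_mul_norm_sub_starProjection M hu hsum
      _ ≤ ∑ _i : Fin N, C * ‖x‖ * cyclePathLength M x :=
        Finset.sum_le_sum fun i _ => mul_le_mul (hu_norm i)
          (norm_sub_starProjection_le_cyclePathLength M i x) (norm_nonneg _) (by positivity)
      _ = N * C * cyclePathLength M x * ‖x‖ := by simp; ring
  rcases (norm_nonneg x).eq_or_lt with h0 | hpos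
  · rw [← h0]; positivity
  · exact le_of_mul_le_mul_right h hpos

theorem exists_norm_cycleProd_apply_le_of_isClosed
    (hcl : IsClosed ((⨆ i, (M i)ᗮ : Submodule ℂ X) : Set X)) :
    ∃ r, 0 ≤ r ∧ r < 1 ∧ ∀ x ∈ (⨅ i, M i)ᗮ, ‖cycleProd M N x‖ ≤ r * ‖x‖ := by
  obtain ⟨B, hB₀, hB⟩ := exists_norm_le_mul_cyclePathLength M hcl
  refine exists_lt_one_forall_norm_le_of_sq_le (K := B ^ 2 * N) (by positivity)
    (fun x _ => norm_cycleProd_apply_le M x) fun x hx => ?_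
  calc ‖x‖ ^ 2 ≤ (B * cyclePathLength M x) ^ 2 := pow_le_pow_left₀ (norm_nonneg _) (hB x hx) 2
    _ = B ^ 2 * cyclePathLength M x ^ 2 := by ring
    _ ≤ B ^ 2 * (N * (‖x‖ ^ 2 - ‖cycleProd M N x‖ ^ 2)) := by
      gcongr; exact cyclePathLength_sq_le M x
    _ = B ^ 2 * N * (‖x‖ ^ 2 - ‖cycleProd M N x‖ ^ 2) := by ring

theorem isClosed_iSup_orthogonal_of_norm_pow_le {m : ℕ} {c : ℝ} (hc₀ : 0 ≤ c) (hc₁ : c < 1)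
    (h : ∀ x ∈ (⨅ i, M i)ᗮ, ‖(cycleProd M N ^ m) x‖ ≤ c * ‖x‖) :
    IsClosed ((⨆ i, (M i)ᗮ : Submodule ℂ X) : Set X) := by
  have hsub := sub_pow_apply_mem (sub_cycleProd_apply_mem_iSup_orthogonal M) m
  have hmaps (x : X) (hx : x ∈ (⨅ i, M i)ᗮ) : (cycleProd M N ^ m) x ∈ (⨅ i, M i)ᗮ :=
    (Submodule.sub_mem_iff_right _ hx).1 (Submodule.iSup_orthogonal_le_orthogonal_iInf M (hsub x))
  have hle : (⨅ i, M i)ᗮ ≤ ⨆ i, (M i)ᗮ := fun x hx => by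
    obtain ⟨y, rfl⟩ := exists_sub_apply_eq_of_norm_le hmaps hc₀ hc₁ h hx
    exact hsub y
  rw [le_antisymm (Submodule.iSup_orthogonal_le_orthogonal_iInf M) hle]
  exact Submodule.isClosed_orthogonal _

end AlternatingProjections

theorem alternatingProjections_dichotomy_general
    {X : Type*} [NormedAddCommGroup X] [InnerProductSpace ℂ X] [CompleteSpace X]
    {N : ℕ} (M : Fin N → Submodule ℂ X) [∀ i, CompleteSpace (M i)]
    [CompleteSpace (⨅ i, M i : Submodule ℂ X)] :
    (IsClosed ((⨆ i, (M i)ᗮ : Submodule ℂ X) : Set X) →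
      ∃ C : ℝ, 0 < C ∧ ∃ r : ℝ, 0 ≤ r ∧ r < 1 ∧ ∀ n : ℕ,
        ‖(cycleProd M N) ^ n - projOnto (⨅ i, M i)‖ ≤ C * r ^ n) ∧
    (¬ IsClosed ((⨆ i, (M i)ᗮ : Submodule ℂ X) : Set X) →
      ∀ r : ℕ → ℝ, (∀ n, 0 < r n) → Tendsto r atTop (𝓝 0) →
        ∃ x : X, ∀ n : ℕ,
          r n ≤ ‖((cycleProd M N) ^ n) x - (projOnto (⨅ i, M i)) x‖) := by
  rw [projOnto_eq_starProjection]
  refine ⟨fun hcl => ?_, fun hncl r hr_pos hr => ?_⟩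
  · obtain ⟨r, hr₀, hr₁, hr⟩ := exists_norm_cycleProd_apply_le_of_isClosed M hcl
    exact ⟨1, one_pos, r, hr₀, hr₁, fun n => by
      simpa using norm_cycleProd_pow_sub_starProjection_le M hr₀ hr n⟩
  · have hslow (n : ℕ) : ∃ z ∈ (⨅ i, M i)ᗮ, 1 / 2 * ‖z‖ < ‖(cycleProd M N ^ n) z‖ := by
      by_contra! h
      exact hncl (isClosed_iSup_orthogonal_of_norm_pow_le M (by norm_num) (by norm_num) h)
    obtain ⟨x, hxW, hx⟩ := exists_mem_forall_le_norm_pow_apply (Submodule.isClosed_orthogonal _)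
      (norm_cycleProd_apply_le M) hslow hr_pos hr
    refine ⟨x, fun n => ?_⟩
    rw [(Submodule.starProjection_apply_eq_zero_iff _).2 hxW, sub_zero]
    exact hx n

/-- **The dichotomy for the method of alternating projections.** If
`M₁^⊥ + ⋯ + M_N^⊥` is closed then the convergence of `Tⁿ` to `P_M` is exponentially
fast; if it is not closed then the convergence is arbitrarily slow. -/
theorem alternatingProjections_dichotomy
    {X : Type*} [NormedAddCommGroup X] [InnerProductSpace ℂ X] [CompleteSpace X]
    {N : ℕ} (hN : 2 ≤ N) (M : Fin N → Submodule ℂ X) [∀ i, CompleteSpace (M i)]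
    [CompleteSpace (⨅ i, M i : Submodule ℂ X)]
    (hMX : (⨅ i, M i : Submodule ℂ X) ≠ ⊤) :
    (IsClosed ((⨆ i, (M i)ᗮ : Submodule ℂ X) : Set X) →
      ∃ C : ℝ, 0 < C ∧ ∃ r : ℝ, 0 ≤ r ∧ r < 1 ∧ ∀ n : ℕ,
        ‖(cycleProd M N) ^ n - projOnto (⨅ i, M i)‖ ≤ C * r ^ n) ∧
    (¬ IsClosed ((⨆ i, (M i)ᗮ : Submodule ℂ X) : Set X) →
      ∀ r : ℕ → ℝ, (∀ n, 0 < r n) → Tendsto r atTop (𝓝 0) →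
        ∃ x : X, ∀ n : ℕ,
          r n ≤ ‖((cycleProd M N) ^ n) x - (projOnto (⨅ i, M i)) x‖) :=
  alternatingProjections_dichotomy_general M
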